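/- arXiv:0903.1590 — 3 statements merged into one kernel-verified Lean document; each statement's English description precedes it below -/
import Mathlib

section
/- Let R = ℤ[x,y]/(x², y^{2k+1} + c·x·y^{2k-1}) for an integer c and k ≥ 1. Suppose y₁, y₂ are elements of a commutative ring extension of R with y₁ + y₂ = 2y and y₁y₂ = y² + c·x. Then for every natural number n, y₁^{2n+2} + y₂^{2n+2} = 2y^{2n+2} − 2c(n+1)(2n+1)·x·y^{2n}. -/
/-- Equation (2.2): in any commutative ring with x² = 0 (the image of the
relevant quotient ring relation), if y₁ + y₂ = 2y and y₁y₂ = y² + c·x, then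
y₁^{2n+2} + y₂^{2n+2} = 2y^{2n+2} − 2c(n+1)(2n+1)·x·y^{2n}. -/
theorem stmt_0 {S : Type*} [CommRing S] (c : ℤ) (x y y₁ y₂ : S)
    (hx : x ^ 2 = 0) (h1 : y₁ + y₂ = 2 * y) (h2 : y₁ * y₂ = y ^ 2 + (c : S) * x) :
    ∀ n : ℕ, y₁ ^ (2 * n + 2) + y₂ ^ (2 * n + 2) =
      2 * y ^ (2 * n + 2) - 2 * (c : S) * ((n : S) + 1) * (2 * (n : S) + 1) * x * y ^ (2 * n) := by
  have aux : ∀ m : ℕ, y₁ ^ (m + 2) + y₂ ^ (m + 2) =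
      2 * y ^ (m + 2) - ((m : S) + 1) * ((m : S) + 2) * (c : S) * x * y ^ m := by
    intro m
    induction m using Nat.strong_induction_on with
    | _ m ih =>
      match m with
      | 0 =>
        push_cast
        linear_combination (y₁ + y₂ + 2 * y) * h1 - 2 * h2
      | 1 =>
        push_cast
        linear_combination (y₁ ^ 2 + y₂ ^ 2 + 2 * y ^ 2 + 2 * y * y₁ + 2 * y * y₂ +
            y₁ * y₂ - 2 * (c : S) * x) * h1 -
          (2 * y₁ + 2 * y₂ + 2 * y) * h2
      | (m + 2) =>
        have A := ih (m + 1) (by omega)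
        have B := ih m (by omega)
        push_cast at A B ⊢
        linear_combination (y₁ ^ (m + 3) + y₂ ^ (m + 3)) * h1 -
          (y₁ ^ (m + 2) + y₂ ^ (m + 2)) * h2 + 2 * y * A - (y ^ 2 + (c : S) * x) * B +
          ((m : S) + 1) * ((m : S) + 2) * (c : S) ^ 2 * y ^ m * hx
  intro n
  have := aux (2 * n)
  push_cast at this
  linear_combination this
end

section
/- Let k ≥ 1, c an integer, and work in the commutative ring R = ℤ[x,y]/(x², y^{2k+1} + c·x·y^{2k−1}). Then ((2k+1)y² − 2cx)^{k+1} = −(4k+3)(2k+1)^k · c · x·y^{2k}. -/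
/-!
Since x² = 0, the term −2cx is square-zero, so the binomial expansion of
((2k+1)y² − 2cx)^{k+1} stops after the linear term:
(2k+1)^{k+1} y^{2k+2} − 2c(k+1)(2k+1)^k x y^{2k}.
Multiplying the second relation by y gives y^{2k+2} = −c x y^{2k}, and the two
terms combine to −c(2k+1)^k((2k+1) + 2(k+1)) x y^{2k}.
-/

open MvPolynomial

/-- The ideal (x², y^{2k+1} + c·x·y^{2k−1}) in ℤ[x,y], with x = X 0, y = X 1. -/
noncomputable def relIdealZ (c : ℤ) (k : ℕ) : Ideal (MvPolynomial (Fin 2) ℤ) :=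
  Ideal.span {X 0 ^ 2, X 1 ^ (2 * k + 1) + C c * X 0 * X 1 ^ (2 * k - 1)}

theorem add_pow_succ_of_sq_eq_zero {R : Type*} [CommSemiring R] (u : R) {v : R} (hv : v ^ 2 = 0)
    (n : ℕ) : (u + v) ^ (n + 1) = u ^ (n + 1) + (n + 1) * u ^ n * v := by
  obtain ⟨r, hr⟩ := Polynomial.powAddExpansion u v (n + 1)
  simpa [hv] using hr

theorem pontryagin_class_pow_eq {R : Type*} [CommRing R] {k : ℕ} (hk : 1 ≤ k) {c x y : R}
    (hx : x ^ 2 = 0) (hy : y ^ (2 * k + 1) + c * x * y ^ (2 * k - 1) = 0) :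
    ((2 * k + 1) * y ^ 2 - 2 * c * x) ^ (k + 1) =
      -((4 * k + 3) * (2 * k + 1) ^ k * c * x * y ^ (2 * k)) := by
  have hy_succ : y ^ (2 * k + 2) = -c * x * y ^ (2 * k) := by
    obtain ⟨m, hm⟩ : ∃ m, 2 * k = m + 1 := ⟨2 * k - 1, by omega⟩
    rw [show 2 * k - 1 = m by omega, hm] at hy
    rw [hm]
    linear_combination y * hy
  have hv : (-2 * c * x) ^ 2 = 0 := by linear_combination 4 * c ^ 2 * hx
  have expansion := add_pow_succ_of_sq_eq_zero ((2 * k + 1) * y ^ 2) hv k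
  rw [mul_pow, mul_pow, ← pow_mul, ← pow_mul] at expansion
  linear_combination expansion + (2 * (k : R) + 1) ^ (k + 1) * hy_succ

/-- In R = ℤ[x,y]/(x², y^{2k+1} + c·x·y^{2k−1}) with k ≥ 1,
((2k+1)y² − 2cx)^{k+1} = −(4k+3)(2k+1)^k·c·x·y^{2k}  (Lemma 3.2). -/
theorem stmt_4 (k : ℕ) (hk : 1 ≤ k) (c : ℤ) :
    Ideal.Quotient.mk (relIdealZ c k)
        ((C (2 * (k : ℤ) + 1) * X 1 ^ 2 - C (2 * c) * X 0) ^ (k + 1)) =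
    Ideal.Quotient.mk (relIdealZ c k)
        (- (C ((4 * (k : ℤ) + 3) * (2 * (k : ℤ) + 1) ^ k * c) * X 0 * X 1 ^ (2 * k))) := by
  have hx : Ideal.Quotient.mk (relIdealZ c k) (X 0) ^ 2 = 0 := by
    rw [← map_pow, Ideal.Quotient.eq_zero_iff_mem]
    exact Ideal.subset_span (Set.mem_insert _ _)
  have hy : Ideal.Quotient.mk (relIdealZ c k) (X 1) ^ (2 * k + 1) +
      Ideal.Quotient.mk (relIdealZ c k) (C c) * Ideal.Quotient.mk (relIdealZ c k) (X 0) *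
        Ideal.Quotient.mk (relIdealZ c k) (X 1) ^ (2 * k - 1) = 0 := by
    simp only [← map_pow, ← map_mul, ← map_add, Ideal.Quotient.eq_zero_iff_mem]
    exact Ideal.subset_span (Set.mem_insert_of_mem _ rfl)
  simpa only [map_pow, map_sub, map_mul, map_neg, map_add, map_one, map_natCast, map_ofNat]
    using pontryagin_class_pow_eq hk hx hy
end

section
/- Let k ≥ 1, c an integer, and work in R = ℤ[x,y]/(x², y^{2k+1} + c·x·y^{2k−1}). Then ((2k+1)y² − 2cx)^{k−1} · (k(2k+1)y⁴ − 4c(k−1)xy²) = −(2k+1)^{k−1}(4k² + 3k − 4) · c · x·y^{2k}. -/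
open MvPolynomial
set_option maxHeartbeats 1000000

private lemma nilp_pow {R : Type*} [CommRing R] (a b x : R) (h : x ^ 2 = 0) :
    ∀ n : ℕ, (a + b * x) ^ (n + 1) = a ^ (n + 1) + (n + 1 : ℕ) * (a ^ n * b * x)
  | 0 => by push_cast; ring
  | n + 1 => by
    rw [pow_succ, nilp_pow a b x h n]
    push_cast
    linear_combination ((n : R) + 1) * a ^ n * b ^ 2 * h

/-- In R = ℤ[x,y]/(x², y^{2k+1} + c·x·y^{2k−1}) with k ≥ 1,
((2k+1)y² − 2cx)^{k−1}·(k(2k+1)y⁴ − 4c(k−1)xy²)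
  = −(2k+1)^{k−1}(4k²+3k−4)·c·x·y^{2k}  (Lemma 3.5). -/
theorem stmt_5 (k : ℕ) (hk : 1 ≤ k) (c : ℤ) :
    Ideal.Quotient.mk (relIdealZ c k)
        ((C (2 * (k : ℤ) + 1) * X 1 ^ 2 - C (2 * c) * X 0) ^ (k - 1) *
          (C ((k : ℤ) * (2 * (k : ℤ) + 1)) * X 1 ^ 4 -
            C (4 * c * ((k : ℤ) - 1)) * X 0 * X 1 ^ 2)) =
    Ideal.Quotient.mk (relIdealZ c k)
        (- (C ((2 * (k : ℤ) + 1) ^ (k - 1) * (4 * (k : ℤ) ^ 2 + 3 * (k : ℤ) - 4) * c) *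
          X 0 * X 1 ^ (2 * k))) := by
  set f := Ideal.Quotient.mk (relIdealZ c k) with hf
  have hg : ∀ t : ℤ, f (C t) = (f.comp (C : ℤ →+* MvPolynomial (Fin 2) ℤ)) t := fun t => rfl
  set g := f.comp (C : ℤ →+* MvPolynomial (Fin 2) ℤ) with hgdef
  have hx : f (X 0) ^ 2 = 0 := by
    rw [← map_pow, Ideal.Quotient.eq_zero_iff_mem]
    exact Ideal.subset_span (Or.inl rfl)
  have hy : f (X 1) ^ (2 * k + 1) + g c * f (X 0) * f (X 1) ^ (2 * k - 1) = 0 := by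
    rw [hgdef, RingHom.comp_apply, ← map_pow, ← map_pow, ← map_mul, ← map_mul, ← map_add,
      Ideal.Quotient.eq_zero_iff_mem]
    exact Ideal.subset_span (Or.inr rfl)
  set x := f (X 0) with hxd
  set y := f (X 1) with hyd
  simp only [map_mul, map_pow, map_sub, map_neg, hg, map_add, map_one, map_ofNat, map_natCast]
  -- now goal in terms of x, y, g c, (k : _)
  obtain ⟨m, rfl⟩ : ∃ m, k = m + 1 := ⟨k - 1, (Nat.succ_pred_eq_of_pos hk).symm⟩
  rcases m with _ | m
  · -- k = 1
    simp only [Nat.add_sub_cancel] at *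
    push_cast at hy ⊢
    norm_num at hy ⊢
    linear_combination (3 * y) * hy
  · -- k = m + 2
    have e1 : m + 2 - 1 = m + 1 := rfl
    have e2 : 2 * (m + 2) + 1 = 2 * m + 5 := by ring
    have e3 : 2 * (m + 2) - 1 = 2 * m + 3 := by omega
    have e4 : 2 * (m + 2) = 2 * m + 4 := by ring
    rw [e2, e3] at hy
    rw [e1, e4]
    push_cast at hy ⊢
    have hb : ((2 * ((m : _) + 2) + 1) * y ^ 2 - 2 * g c * x) ^ (m + 1)
        = (2 * (m : _) + 5) ^ (m + 1) * y ^ (2 * m + 2)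
          + ((m : _) + 1) * ((2 * (m : _) + 5) ^ m * y ^ (2 * m) * (-(2 * g c)) * x) := by
      rw [show (2 * ((m : _) + 2) + 1) * y ^ 2 - 2 * g c * x
          = (2 * (m : _) + 5) * y ^ 2 + (-(2 * g c)) * x by ring,
        nilp_pow _ _ _ hx m, mul_pow, mul_pow, ← pow_mul, ← pow_mul]
      push_cast; ring
    linear_combination
      (((m : _) + 2) * (2 * ((m : _) + 2) + 1) * y ^ 4
          - 4 * g c * (((m : _) + 2) - 1) * x * y ^ 2) * hb
      + (((m : _) + 2) * (2 * ((m : _) + 2) + 1) ^ (m + 2) * y) * hy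
      + (8 * g c ^ 2 * (((m : _) + 1)) * (((m : _) + 1)) * (2 * ((m : _) + 2) + 1) ^ m * y ^ (2 * m + 2)) * hx
end
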